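/- Let r be a positive integer and let Γ = Γ₀ ⋊ Γ₁ be a semidirect product with Γ₀ ≅ H(r) and Γ₁ ≅ ℤ generated by γ; let M ∈ GL₂(ℤ) be the matrix describing the induced action of γ on Γ₀/z(Γ₀) ≅ ℤ². Suppose M has no eigenvalue equal to 1. Then: (i) the commutator subgroup [Γ, Γ] is contained in Γ₀, and [Γ,Γ]/z([Γ,Γ]), viewed inside Γ₀/z(Γ₀) ≅ ℤ², equals the image of M − Id and is a free abelian group of rank 2; (ii) [Γ, Γ] ≅ H(r') for some positive integer r', and [Γ, Γ] has finite index in Γ₀; (iii) Γ₀ = rad([Γ,Γ], Γ), the set of elements g ∈ Γ with g^k ∈ [Γ,Γ] for some positive integer k; in particular Γ₀ is a characteristic subgroup of Γ. -/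

import Mathlib

/-- The "discrete Heisenberg group" H(r): the group with presentation
⟨δ₁, δ₂, δ₃ ∣ [δ₁,δ₃] = [δ₂,δ₃] = 1, [δ₁,δ₂] = δ₃^r⟩, realized concretely as the
group of upper unitriangular 3×3 rational matrices with (1,2)-entry `a ∈ ℤ`,
(2,3)-entry `b ∈ ℤ` and (1,3)-entry `c/r` with `c ∈ ℤ`; the element ⟨a, b, c⟩
corresponds to δ₁^a δ₂^b (δ₃-part c), with δ₁ = ⟨1,0,0⟩, δ₂ = ⟨0,1,0⟩,
δ₃ = ⟨0,0,1⟩. -/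
@[ext]
structure Heis (r : ℕ) : Type where
  a : ℤ
  b : ℤ
  c : ℤ

namespace Heis

variable {r : ℕ}

instance : Mul (Heis r) :=
  ⟨fun x y => ⟨x.a + y.a, x.b + y.b, x.c + y.c + r * x.a * y.b⟩⟩

instance : One (Heis r) := ⟨⟨0, 0, 0⟩⟩

instance : Inv (Heis r) :=
  ⟨fun x => ⟨-x.a, -x.b, -x.c + r * x.a * x.b⟩⟩

@[simp] lemma mul_a (x y : Heis r) : (x * y).a = x.a + y.a := rfl
@[simp] lemma mul_b (x y : Heis r) : (x * y).b = x.b + y.b := rfl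
@[simp] lemma mul_c (x y : Heis r) : (x * y).c = x.c + y.c + r * x.a * y.b := rfl
@[simp] lemma one_a : (1 : Heis r).a = 0 := rfl
@[simp] lemma one_b : (1 : Heis r).b = 0 := rfl
@[simp] lemma one_c : (1 : Heis r).c = 0 := rfl
@[simp] lemma inv_a (x : Heis r) : x⁻¹.a = -x.a := rfl
@[simp] lemma inv_b (x : Heis r) : x⁻¹.b = -x.b := rfl
@[simp] lemma inv_c (x : Heis r) : x⁻¹.c = -x.c + r * x.a * x.b := rfl

instance instGroup : Group (Heis r) where
  mul_assoc x y z := by ext <;> simp <;> ring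
  one_mul x := by ext <;> simp
  mul_one x := by ext <;> simp
  inv_mul_cancel x := by ext <;> simp <;> ring

/-- The generator δ₁ of H(r). -/
def δ₁ : Heis r := ⟨1, 0, 0⟩

/-- The generator δ₂ of H(r). -/
def δ₂ : Heis r := ⟨0, 1, 0⟩

/-- The generator δ₃ of H(r); it generates the center of H(r) (for r > 0). -/
def δ₃ : Heis r := ⟨0, 0, 1⟩

end Heis

open Matrix

/-- The semidirect product H(r) ⋊ ℤ in which a fixed generator γ of ℤ (the image of
`Multiplicative.ofAdd 1`) acts on H(r) by the automorphism ψ. -/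
abbrev HeisSdp (r : ℕ) (ψ : MulAut (Heis r)) : Type :=
  SemidirectProduct (Heis r) (Multiplicative ℤ) (zpowersHom _ ψ)

/-- `InducedMatrix r ψ M` says that the automorphism of H(r)/z(H(r)) ≅ ℤ² induced by
the automorphism ψ of H(r) is given by the matrix M ∈ GL₂(ℤ) in the basis consisting
of the images of δ₁ and δ₂, i.e. ψ(δᵢ) = δ₁^{M₁ᵢ} δ₂^{M₂ᵢ} δ₃^{pᵢ} for i = 1,2. -/
def InducedMatrix (r : ℕ) (ψ : MulAut (Heis r)) (M : GL (Fin 2) ℤ) : Prop :=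
  (ψ Heis.δ₁).a = (M : Matrix (Fin 2) (Fin 2) ℤ) 0 0 ∧
  (ψ Heis.δ₁).b = (M : Matrix (Fin 2) (Fin 2) ℤ) 1 0 ∧
  (ψ Heis.δ₂).a = (M : Matrix (Fin 2) (Fin 2) ℤ) 0 1 ∧
  (ψ Heis.δ₂).b = (M : Matrix (Fin 2) (Fin 2) ℤ) 1 1

/-- The projection H(r) → H(r)/z(H(r)) ≅ ℤ², sending a group element to the vector of
exponents of δ₁ and δ₂. -/
def heisProj (r : ℕ) : Heis r →* Multiplicative (Fin 2 → ℤ) where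
  toFun x := Multiplicative.ofAdd ![x.a, x.b]
  map_one' := by
    simp only [← ofAdd_zero]
    exact congrArg Multiplicative.ofAdd (by funext i; fin_cases i <;> rfl)
  map_mul' x y := by
    rw [← ofAdd_add]
    exact congrArg Multiplicative.ofAdd (by funext i; fin_cases i <;> simp)

/-!
Let `K ≤ H(r)` be generated by the commutators and the elements `ψ x * x⁻¹`. In `Γ`,
`ψ x * x⁻¹ = ⁅γ, x⁆`, and `Γ / K` is abelian because `ψ` acts trivially on `H(r) / K`; hence
`[Γ, Γ] = K`. Modulo the centre `⟨δ₃⟩`, commutators vanish and `ψ x * x⁻¹` becomes `(M - 1) x̄`,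
so `K` maps onto the image of `M - 1`, a lattice of full rank because `det (M - 1) ≠ 0`.
Consequently `K` is generated by `u = ψ δ₁ * δ₁⁻¹`, `v = ψ δ₂ * δ₂⁻¹` and a generator `δ₃ ^ s` of
its central part, with `⁅u, v⁆ = δ₃ ^ (r * det (M - 1))`, which makes `K` a copy of `H(r')` with
`s * r' = r * det (M - 1)`. Moreover `x ^ (det (M - 1) * r) ∈ K` for every `x`, which gives the
finite index and, `ℤ` being torsion-free, `H(r) = rad([Γ, Γ], Γ)`; a radical of a
characteristic subgroup is characteristic.
-/

open scoped commutatorElement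

theorem Subgroup.characteristic_of_forall_mem_iff_exists_pow_mem {G : Type*} [Group G]
    {H K : Subgroup G} [hK : K.Characteristic]
    (h : ∀ g, g ∈ H ↔ ∃ k : ℕ, 0 < k ∧ g ^ k ∈ K) : H.Characteristic := by
  refine characteristic_iff_le_comap.2 fun ϕ g hg => ?_
  obtain ⟨k, hk, hgk⟩ := (h g).1 hg
  refine (h _).2 ⟨k, hk, ?_⟩
  rw [← map_pow, ← Subgroup.mem_comap (f := ϕ.toMonoidHom), hK.fixed]
  exact hgk

open scoped IsMulCommutative in
theorem Subgroup.finiteIndex_of_commutator_le_of_exists_pow_mem {G : Type*} [Group G]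
    [Group.FG G] {K : Subgroup G} [K.Normal] (hK : _root_.commutator G ≤ K)
    (hpow : ∀ x : G, ∃ k : ℕ, 0 < k ∧ x ^ k ∈ K) : K.FiniteIndex := by
  have := Normal.quotient_commutative_iff_commutator_le.2 hK
  have : Finite (G ⧸ K) := CommGroup.finite_of_fg_isMulTorsion _ fun q => by
    induction q using QuotientGroup.induction_on with | H x => ?_
    obtain ⟨k, hk, hxk⟩ := hpow x
    refine isOfFinOrder_iff_pow_eq_one.2 ⟨k, hk, ?_⟩
    rwa [← QuotientGroup.mk_pow, QuotientGroup.eq_one_iff]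
  exact finiteIndex_of_finite_quotient

theorem Subgroup.exists_pow_mem_of_zpow_mem {G : Type*} [Group G] {K : Subgroup G} {x : G}
    {n : ℤ} (hn : n ≠ 0) (h : x ^ n ∈ K) : ∃ k : ℕ, 0 < k ∧ x ^ k ∈ K :=
  ⟨n.natAbs, Int.natAbs_pos.2 hn, by
    rcases Int.natAbs_eq n with h' | h'
    · rwa [h', zpow_natCast] at h
    · rwa [h', _root_.zpow_neg, zpow_natCast, inv_mem_iff] at h⟩

theorem Matrix.det_sub_one_ne_zero_of_not_isRoot_charpoly {n : Type*} [Fintype n] [DecidableEq n]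
    {R : Type*} [CommRing R] {A : Matrix n n ℤ}
    (h : ¬ (A.map ((↑) : ℤ → R)).charpoly.IsRoot 1) : (A - 1).det ≠ 0 := by
  contrapose! h
  have h' : (1 - A).det = 0 := by rw [← neg_sub, det_neg, h, mul_zero]
  have hmap : (Int.castRingHom R).mapMatrix (1 - A) = scalar n (1 : R) - A.map (↑) := by
    simp [Matrix.map_sub, Matrix.map_one]
  rw [Polynomial.IsRoot.def, eval_charpoly, ← hmap, ← RingHom.map_det, h', map_zero]

theorem Int.exists_mem_addSubgroup_iff_dvd {S : AddSubgroup ℤ} {n : ℤ} (hn : n ∈ S) (hn0 : n ≠ 0) :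
    ∃ (s : ℤ) (k : ℕ), 0 < k ∧ s * k = n ∧ ∀ e, e ∈ S ↔ s ∣ e := by
  obtain ⟨s₀, rfl⟩ := Int.subgroup_cyclic S
  simp_rw [← AddSubgroup.zmultiples_eq_closure, Int.mem_zmultiples_iff] at *
  obtain ⟨t, rfl⟩ := hn
  have ht : t ≠ 0 := right_ne_zero_of_mul hn0
  refine ⟨s₀ * t.sign, t.natAbs, Int.natAbs_pos.2 ht, by rw [mul_assoc, Int.sign_mul_natAbs],
    fun e => (IsUnit.mul_right_dvd ?_).symm⟩
  rcases ht.lt_or_gt with h | h <;> simp [Int.sign_eq_neg_one_of_neg, Int.sign_eq_one_of_pos, h]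

theorem Matrix.nonempty_mulEquiv_range_mulVecLin {n R : Type*} [Fintype n] [DecidableEq n]
    [CommRing R] [IsDomain R] {A : Matrix n n R} (hA : A.det ≠ 0) :
    Nonempty (AddSubgroup.toSubgroup (LinearMap.range A.mulVecLin).toAddSubgroup ≃*
      Multiplicative (n → R)) :=
  ⟨AddEquiv.toMultiplicative (LinearEquiv.ofInjective A.mulVecLin <|
    mulVec_injective_of_det_mem_nonZeroDivisors (mem_nonZeroDivisors_of_ne_zero hA)).symm.toAddEquiv⟩

theorem SemidirectProduct.mem_range_inl_of_pow_mem {N : Type*} [Group N]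
    {φ : Multiplicative ℤ →* MulAut N} {g : N ⋊[φ] Multiplicative ℤ} {k : ℕ} (hk : k ≠ 0)
    (h : g ^ k ∈ (inl : N →* N ⋊[φ] Multiplicative ℤ).range) :
    g ∈ (inl : N →* N ⋊[φ] Multiplicative ℤ).range := by
  rw [range_inl_eq_ker_rightHom, MonoidHom.mem_ker, map_pow] at *
  simpa [hk] using congrArg Multiplicative.toAdd h

namespace MulAut

variable {N : Type*} [Group N] (ψ : MulAut N)

def twistedCommutator : Subgroup N :=
  Subgroup.closure (commutatorSet N ∪ Set.range fun x => ψ x * x⁻¹)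

lemma commutatorElement_mem_twistedCommutator (x y : N) : ⁅x, y⁆ ∈ ψ.twistedCommutator :=
  Subgroup.subset_closure (Or.inl ⟨x, y, rfl⟩)

lemma apply_mul_inv_mem_twistedCommutator (x : N) : ψ x * x⁻¹ ∈ ψ.twistedCommutator :=
  Subgroup.subset_closure (Or.inr ⟨x, rfl⟩)

lemma commutator_le_twistedCommutator : commutator N ≤ ψ.twistedCommutator := by
  rw [commutator_eq_closure]
  exact Subgroup.closure_mono Set.subset_union_left

instance : ψ.twistedCommutator.Normal :=
  .of_commutator_le (G := N) ψ.commutator_le_twistedCommutator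

lemma mk_zpow_apply (n : ℤ) (x : N) :
    (((ψ ^ n) x : N) : N ⧸ ψ.twistedCommutator) = x := by
  have mk_apply (y : N) : ((ψ y : N) : N ⧸ ψ.twistedCommutator) = y :=
    QuotientGroup.eq_iff_div_mem.2 <| by
      simpa [div_eq_mul_inv] using ψ.apply_mul_inv_mem_twistedCommutator y
  induction n using Int.induction_on generalizing x with
  | zero => rfl
  | succ k ih => rw [_root_.zpow_add_one, MulAut.mul_apply, ih, mk_apply]
  | pred k ih =>
    rw [_root_.zpow_sub_one, MulAut.mul_apply, ih, ← mk_apply (ψ⁻¹ x), MulAut.apply_inv_self]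

theorem commutator_semidirectProduct :
    commutator (N ⋊[zpowersHom (MulAut N) ψ] Multiplicative ℤ) =
      ψ.twistedCommutator.map SemidirectProduct.inl := by
  apply le_antisymm
  · have := (Subgroup.Normal.quotient_commutative_iff_commutator_le).2
      ψ.commutator_le_twistedCommutator
    let q : N ⋊[zpowersHom (MulAut N) ψ] Multiplicative ℤ →* N ⧸ ψ.twistedCommutator :=
      SemidirectProduct.lift (QuotientGroup.mk' _) 1 fun g => by
        ext x
        simp [mk_zpow_apply]
    rw [commutator_def, Subgroup.commutator_le]
    intro g _ h _
    obtain ⟨n, hn⟩ : ⁅g, h⁆ ∈ (SemidirectProduct.inl).range := by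
      rw [SemidirectProduct.range_inl_eq_ker_rightHom, MonoidHom.mem_ker,
        map_commutatorElement, commutatorElement_eq_one_iff_mul_comm, mul_comm]
    refine ⟨n, ?_, hn⟩
    have hq : q ⁅g, h⁆ = 1 := by
      rw [map_commutatorElement, commutatorElement_eq_one_iff_mul_comm, mul_comm']
    rw [← hn] at hq
    simpa [q] using hq
  · rw [Subgroup.map_le_iff_le_comap, twistedCommutator, Subgroup.closure_le]
    rintro _ (⟨x, y, rfl⟩ | ⟨x, rfl⟩)
    · simp only [SetLike.mem_coe, Subgroup.mem_comap, map_commutatorElement]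
      exact Subgroup.commutator_mem_commutator (Subgroup.mem_top _) (Subgroup.mem_top _)
    · have h := SemidirectProduct.inl_aut (φ := zpowersHom (MulAut N) ψ) (Multiplicative.ofAdd 1) x
      simp only [zpowersHom_apply, toAdd_ofAdd, zpow_one] at h
      simp only [SetLike.mem_coe, Subgroup.mem_comap, map_mul, map_inv, h]
      rw [← commutatorElement_def]
      exact Subgroup.commutator_mem_commutator (Subgroup.mem_top _) (Subgroup.mem_top _)

theorem mem_range_inl_iff_exists_pow_mem_commutator
    (hpow : ∀ x : N, ∃ k : ℕ, 0 < k ∧ x ^ k ∈ ψ.twistedCommutator)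
    (g : N ⋊[zpowersHom (MulAut N) ψ] Multiplicative ℤ) :
    g ∈ SemidirectProduct.inl.range ↔
      ∃ k : ℕ, 0 < k ∧ g ^ k ∈ commutator (N ⋊[zpowersHom (MulAut N) ψ] Multiplicative ℤ) := by
  rw [ψ.commutator_semidirectProduct]
  constructor
  · rintro ⟨x, rfl⟩
    obtain ⟨k, hk, hxk⟩ := hpow x
    exact ⟨k, hk, x ^ k, hxk, map_pow _ _ _⟩
  · rintro ⟨k, hk, hgk⟩
    exact SemidirectProduct.mem_range_inl_of_pow_mem hk.ne' (Subgroup.map_le_range _ _ hgk)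

end MulAut

namespace Heis

def triangular (n : ℤ) : ℤ := n * (n - 1) / 2

@[simp] lemma triangular_zero : triangular 0 = 0 := rfl
@[simp] lemma triangular_one : triangular 1 = 0 := rfl

lemma triangular_add (m n : ℤ) : triangular (m + n) = triangular m + triangular n + m * n := by
  have two_mul_triangular (k : ℤ) : 2 * triangular k = k * (k - 1) :=
    Int.two_mul_ediv_two_of_even (Int.even_mul_pred_self k)
  have := two_mul_triangular (m + n)
  linarith [two_mul_triangular m, two_mul_triangular n]

variable {r : ℕ}

lemma zpow_of_a_mul_b_eq_zero {x : Heis r} (h : x.a * x.b = 0) (n : ℤ) :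
    x ^ n = ⟨n * x.a, n * x.b, n * x.c⟩ := by
  induction n using Int.induction_on with
  | zero => ext <;> simp
  | succ k ih =>
    rw [_root_.zpow_add_one, ih]
    ext
    · simp; ring
    · simp; ring
    · simp only [mul_c]; linear_combination (r * k : ℤ) * h
  | pred k ih =>
    rw [_root_.zpow_sub_one, ih]
    ext
    · simp; ring
    · simp; ring
    · simp only [mul_c, inv_b, inv_c]; linear_combination (r * (k + 1) : ℤ) * h

@[simp] lemma δ₁_zpow (n : ℤ) : (δ₁ : Heis r) ^ n = ⟨n, 0, 0⟩ := by
  rw [zpow_of_a_mul_b_eq_zero (by simp [δ₁])]; simp [δ₁]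

@[simp] lemma δ₂_zpow (n : ℤ) : (δ₂ : Heis r) ^ n = ⟨0, n, 0⟩ := by
  rw [zpow_of_a_mul_b_eq_zero (by simp [δ₂])]; simp [δ₂]

@[simp] lemma δ₃_zpow (n : ℤ) : (δ₃ : Heis r) ^ n = ⟨0, 0, n⟩ := by
  rw [zpow_of_a_mul_b_eq_zero (by simp [δ₃])]; simp [δ₃]

@[simp] lemma δ₁_a : (δ₁ : Heis r).a = 1 := rfl
@[simp] lemma δ₁_b : (δ₁ : Heis r).b = 0 := rfl
@[simp] lemma δ₂_a : (δ₂ : Heis r).a = 0 := rfl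
@[simp] lemma δ₂_b : (δ₂ : Heis r).b = 1 := rfl

lemma zpow_a (x : Heis r) (n : ℤ) : (x ^ n).a = n * x.a := by
  induction n using Int.induction_on with
  | zero => simp
  | succ k ih => rw [_root_.zpow_add_one, mul_a, ih]; ring
  | pred k ih => rw [_root_.zpow_sub_one, mul_a, inv_a, ih]; ring

lemma zpow_b (x : Heis r) (n : ℤ) : (x ^ n).b = n * x.b := by
  induction n using Int.induction_on with
  | zero => simp
  | succ k ih => rw [_root_.zpow_add_one, mul_b, ih]; ring
  | pred k ih => rw [_root_.zpow_sub_one, mul_b, inv_b, ih]; ring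

lemma commute_δ₃ (x : Heis r) : Commute δ₃ x := by
  ext <;> simp [δ₃]; ring

lemma closure_δ : Subgroup.closure {δ₁, δ₂, δ₃} = (⊤ : Subgroup (Heis r)) := by
  refine eq_top_iff.2 fun x _ => ?_
  have hx : x = δ₁ ^ x.a * δ₂ ^ x.b * δ₃ ^ (x.c - r * x.a * x.b) := by ext <;> simp
  rw [hx]
  refine mul_mem (mul_mem ?_ ?_) ?_ <;> exact zpow_mem (Subgroup.subset_closure (by simp)) _

instance : Group.FG (Heis r) := Group.fg_iff.2 ⟨_, closure_δ, by simp⟩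

lemma commutatorElement_eq (x y : Heis r) : ⁅x, y⁆ = δ₃ ^ (r * (x.a * y.b - x.b * y.a)) := by
  rw [commutatorElement_def]; ext <;> simp; ring

@[simp] lemma toAdd_heisProj (x : Heis r) :
    Multiplicative.toAdd (heisProj r x) = ![x.a, x.b] := rfl

lemma heisProj_eq_one_iff {x : Heis r} : heisProj r x = 1 ↔ x.a = 0 ∧ x.b = 0 := by
  simp [heisProj, ← ofAdd_zero, funext_iff, Fin.forall_fin_two]

lemma ker_heisProj : (heisProj r).ker = Subgroup.zpowers δ₃ := by
  ext x
  rw [MonoidHom.mem_ker, heisProj_eq_one_iff, Subgroup.mem_zpowers_iff]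
  constructor
  · rintro ⟨ha, hb⟩; exact ⟨x.c, by ext <;> simp [ha, hb]⟩
  · rintro ⟨k, rfl⟩; simp

lemma center_eq_ker_heisProj (hr : 0 < r) : Subgroup.center (Heis r) = (heisProj r).ker := by
  ext x
  rw [Subgroup.mem_center_iff, MonoidHom.mem_ker, heisProj_eq_one_iff]
  constructor
  · intro h
    have h₁ := congrArg Heis.c (h δ₁)
    have h₂ := congrArg Heis.c (h δ₂)
    simp [δ₁, δ₂, hr.ne'] at h₁ h₂
    exact ⟨h₂, h₁⟩
  · rintro ⟨ha, hb⟩ g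
    ext <;> simp [ha, hb]; ring

/-- The coordinates are those of `u ^ a * v ^ b * (δ₃ ^ s) ^ (c - r' * a * b)`. -/
def lift (u v : Heis r) (s : ℤ) {r' : ℕ} (h : s * r' = r * (u.a * v.b - u.b * v.a)) :
    Heis r' →* Heis r where
  toFun x := ⟨x.a * u.a + x.b * v.a, x.a * u.b + x.b * v.b,
    x.a * u.c + x.b * v.c + s * (x.c - r' * x.a * x.b) +
      r * (u.a * u.b * triangular x.a + v.a * v.b * triangular x.b + x.a * x.b * u.a * v.b)⟩
  map_one' := by ext <;> simp
  map_mul' x y := by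
    ext
    · simp; ring
    · simp; ring
    · simp only [mul_a, mul_b, mul_c, triangular_add]
      linear_combination (-(x.b * y.a)) * h

section lift

variable {u v : Heis r} {s : ℤ} {r' : ℕ} (h : s * r' = r * (u.a * v.b - u.b * v.a))

@[simp] lemma lift_δ₁ : lift u v s h δ₁ = u := by ext <;> simp [lift, δ₁]
@[simp] lemma lift_δ₂ : lift u v s h δ₂ = v := by ext <;> simp [lift, δ₂]
@[simp] lemma lift_δ₃ : lift u v s h δ₃ = δ₃ ^ s := by
  rw [δ₃_zpow]; ext <;> simp [lift, δ₃]

lemma range_lift : (lift u v s h).range = Subgroup.closure {u, v, δ₃ ^ s} := by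
  rw [MonoidHom.range_eq_map, ← closure_δ, MonoidHom.map_closure, Set.image_insert_eq,
    Set.image_insert_eq, Set.image_singleton, lift_δ₁, lift_δ₂, lift_δ₃]

lemma lift_injective (hdet : u.a * v.b - u.b * v.a ≠ 0) (hs : s ≠ 0) :
    Function.Injective (lift u v s h) := by
  refine (injective_iff_map_eq_one _).2 fun x hx => ?_
  have ha := congrArg Heis.a hx
  have hb := congrArg Heis.b hx
  have hc := congrArg Heis.c hx
  simp only [lift, MonoidHom.coe_mk, OneHom.coe_mk, one_a, one_b, one_c] at ha hb hc
  have hxa : x.a = 0 := (mul_eq_zero.1 (by linear_combination v.b * ha - v.a * hb :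
    x.a * (u.a * v.b - u.b * v.a) = 0)).resolve_right hdet
  have hxb : x.b = 0 := (mul_eq_zero.1 (by linear_combination u.a * hb - u.b * ha :
    x.b * (u.a * v.b - u.b * v.a) = 0)).resolve_right hdet
  simp only [hxa, hxb, zero_mul, mul_zero, add_zero, zero_add, sub_zero, triangular_zero] at hc
  ext
  · exact hxa
  · exact hxb
  · exact (mul_eq_zero.1 hc).resolve_left hs

end lift

end Heis

namespace InducedMatrix

variable {r : ℕ} {ψ : MulAut (Heis r)} {M : GL (Fin 2) ℤ}

lemma heisProj_apply (hr : 0 < r) (hM : InducedMatrix r ψ M) (x : Heis r) :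
    Multiplicative.toAdd (heisProj r (ψ x)) =
      (M : Matrix (Fin 2) (Fin 2) ℤ) *ᵥ Multiplicative.toAdd (heisProj r x) := by
  obtain ⟨h₀₀, h₁₀, h₀₁, h₁₁⟩ := hM
  have hδ₃ : Heis.δ₃ ∈ (heisProj r).ker := by
    rw [Heis.ker_heisProj]
    exact Subgroup.mem_zpowers _
  have hψδ₃ : ψ Heis.δ₃ ∈ (heisProj r).ker := by
    rw [← Heis.center_eq_ker_heisProj hr] at hδ₃ ⊢
    exact MulEquivClass.apply_mem_center ψ hδ₃
  have key := MonoidHom.eq_of_eqOn_dense Heis.closure_δ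
    (f := (heisProj r).comp ψ.toMonoidHom)
    (g := (AddMonoidHom.toMultiplicative
      (Matrix.mulVecLin (M : Matrix (Fin 2) (Fin 2) ℤ)).toAddMonoidHom).comp (heisProj r))
    (by
      rintro _ (rfl | rfl | rfl)
      · refine Multiplicative.toAdd.injective (funext fun i => ?_)
        fin_cases i <;> simp [h₀₀, h₁₀]
      · refine Multiplicative.toAdd.injective (funext fun i => ?_)
        fin_cases i <;> simp [h₀₁, h₁₁]
      · simp [MonoidHom.mem_ker.1 hδ₃, MonoidHom.mem_ker.1 hψδ₃])
  exact congrArg Multiplicative.toAdd (DFunLike.congr_fun key x)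

lemma heisProj_apply_mul_inv (hr : 0 < r) (hM : InducedMatrix r ψ M) (x : Heis r) :
    Multiplicative.toAdd (heisProj r (ψ x * x⁻¹)) =
      ((M : Matrix (Fin 2) (Fin 2) ℤ) - 1) *ᵥ Multiplicative.toAdd (heisProj r x) := by
  rw [map_mul, map_inv, toAdd_mul, toAdd_inv, hM.heisProj_apply hr, Matrix.sub_mulVec,
    Matrix.one_mulVec, sub_eq_add_neg]

theorem map_heisProj_twistedCommutator (hr : 0 < r) (hM : InducedMatrix r ψ M) :
    ψ.twistedCommutator.map (heisProj r) = AddSubgroup.toSubgroup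
      (LinearMap.range (Matrix.mulVecLin ((M : Matrix (Fin 2) (Fin 2) ℤ) - 1))).toAddSubgroup := by
  apply le_antisymm
  · rw [MulAut.twistedCommutator, MonoidHom.map_closure, Subgroup.closure_le]
    rintro _ ⟨_, ⟨x, y, rfl⟩ | ⟨x, rfl⟩, rfl⟩
    · have : heisProj r ⁅x, y⁆ = 1 := by
        rw [Heis.commutatorElement_eq, Heis.heisProj_eq_one_iff]; simp
      rw [SetLike.mem_coe, this]
      exact one_mem _
    · exact ⟨Multiplicative.toAdd (heisProj r x), (hM.heisProj_apply_mul_inv hr x).symm⟩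
  · rintro w ⟨ν, hν⟩
    let x : Heis r := ⟨ν 0, ν 1, 0⟩
    refine ⟨ψ x * x⁻¹, ψ.apply_mul_inv_mem_twistedCommutator x, ?_⟩
    refine Multiplicative.toAdd.injective ?_
    rw [hM.heisProj_apply_mul_inv hr, ← hν]
    congr
    funext i; fin_cases i <;> rfl

/- `(M - 1) * adj (M - 1) = det (M - 1) • 1`, so `x ^ det (M - 1)` lies in `K` up to a central
factor `δ₃ ^ e`, and `(δ₃ ^ e) ^ r = ⁅δ₁, δ₂⁆ ^ e ∈ K`. -/
theorem zpow_mem_twistedCommutator (hr : 0 < r) (hM : InducedMatrix r ψ M) (x : Heis r) :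
    x ^ (((M : Matrix (Fin 2) (Fin 2) ℤ) - 1).det * r) ∈ ψ.twistedCommutator := by
  set A := (M : Matrix (Fin 2) (Fin 2) ℤ) - 1
  have hproj : heisProj r (x ^ A.det) ∈ ψ.twistedCommutator.map (heisProj r) := by
    rw [hM.map_heisProj_twistedCommutator hr]
    refine ⟨A.adjugate *ᵥ Multiplicative.toAdd (heisProj r x), ?_⟩
    rw [Matrix.mulVecLin_apply, Matrix.mulVec_mulVec, Matrix.mul_adjugate, Matrix.smul_mulVec,
      Matrix.one_mulVec, map_zpow, toAdd_zpow]
  obtain ⟨y, hy, hyx⟩ := hproj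
  obtain ⟨e, he⟩ : y⁻¹ * x ^ A.det ∈ Subgroup.zpowers Heis.δ₃ := by
    rw [← Heis.ker_heisProj, MonoidHom.mem_ker, map_mul, map_inv, hyx, inv_mul_cancel]
  have hδ₃ : Heis.δ₃ ^ (r : ℤ) ∈ ψ.twistedCommutator := by
    simpa [Heis.commutatorElement_eq] using
      ψ.commutatorElement_mem_twistedCommutator Heis.δ₁ Heis.δ₂
  rw [_root_.zpow_mul, ← mul_inv_cancel_left y (x ^ A.det), ← he,
    (Commute.zpow_right (Heis.commute_δ₃ y).symm e).mul_zpow, ← _root_.zpow_mul, mul_comm e,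
    _root_.zpow_mul]
  exact mul_mem (zpow_mem hy _) (zpow_mem hδ₃ _)

lemma twistedCommutator_le_closure (hr : 0 < r) (hM : InducedMatrix r ψ M) {s : ℤ}
    (hs : ∀ e, Heis.δ₃ ^ e ∈ ψ.twistedCommutator → s ∣ e) :
    ψ.twistedCommutator ≤
      Subgroup.closure {ψ Heis.δ₁ * Heis.δ₁⁻¹, ψ Heis.δ₂ * Heis.δ₂⁻¹, Heis.δ₃ ^ s} := by
  set C := Subgroup.closure {ψ Heis.δ₁ * Heis.δ₁⁻¹, ψ Heis.δ₂ * Heis.δ₂⁻¹, Heis.δ₃ ^ s}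
  intro x hx
  have hxproj : heisProj r x ∈ ψ.twistedCommutator.map (heisProj r) := ⟨x, hx, rfl⟩
  rw [hM.map_heisProj_twistedCommutator hr] at hxproj
  obtain ⟨ν, hν⟩ := hxproj
  set y := (ψ Heis.δ₁ * Heis.δ₁⁻¹) ^ ν 0 * (ψ Heis.δ₂ * Heis.δ₂⁻¹) ^ ν 1
  have hyK : y ∈ ψ.twistedCommutator :=
    mul_mem (zpow_mem (ψ.apply_mul_inv_mem_twistedCommutator _) _)
      (zpow_mem (ψ.apply_mul_inv_mem_twistedCommutator _) _)
  have hyC : y ∈ C :=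
    mul_mem (zpow_mem (Subgroup.subset_closure (by simp)) _)
      (zpow_mem (Subgroup.subset_closure (by simp)) _)
  obtain ⟨e, he : Heis.δ₃ ^ e = y⁻¹ * x⟩ : y⁻¹ * x ∈ Subgroup.zpowers Heis.δ₃ := by
    rw [← Heis.ker_heisProj, MonoidHom.mem_ker, Heis.heisProj_eq_one_iff]
    have ha := congrFun hν 0
    have hb := congrFun hν 1
    obtain ⟨h₀₀, h₁₀, h₀₁, h₁₁⟩ := hM
    simp at ha hb
    simp [y, Heis.zpow_a, Heis.zpow_b, h₀₀, h₁₀, h₀₁, h₁₁]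
    constructor <;> linarith
  obtain ⟨k, rfl⟩ := hs e (he ▸ mul_mem (inv_mem hyK) hx)
  rw [← mul_inv_cancel_left y x, ← he]
  refine mul_mem hyC ?_
  simpa [_root_.zpow_mul] using zpow_mem (Subgroup.subset_closure (by simp)) k

theorem exists_mulEquiv_twistedCommutator (hr : 0 < r) (hM : InducedMatrix r ψ M)
    (hdet : ((M : Matrix (Fin 2) (Fin 2) ℤ) - 1).det ≠ 0) :
    ∃ r' : ℕ, 0 < r' ∧ Nonempty (ψ.twistedCommutator ≃* Heis r') := by
  set u := ψ Heis.δ₁ * Heis.δ₁⁻¹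
  set v := ψ Heis.δ₂ * Heis.δ₂⁻¹
  have huv : u.a * v.b - u.b * v.a = ((M : Matrix (Fin 2) (Fin 2) ℤ) - 1).det := by
    obtain ⟨h₀₀, h₁₀, h₀₁, h₁₁⟩ := hM
    simp [u, v, Matrix.det_fin_two, h₀₀, h₁₀, h₀₁, h₁₁]
    ring
  have hmem : (r * (u.a * v.b - u.b * v.a) : ℤ) ∈
      (ψ.twistedCommutator.comap (zpowersHom (Heis r) Heis.δ₃)).toAddSubgroup' := by
    simpa [Heis.commutatorElement_eq, mul_comm] using
      ψ.commutatorElement_mem_twistedCommutator u v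
  have hrdet : (r * (u.a * v.b - u.b * v.a) : ℤ) ≠ 0 :=
    mul_ne_zero (by exact_mod_cast hr.ne') (huv ▸ hdet)
  obtain ⟨s, r', hr', h, hs⟩ := Int.exists_mem_addSubgroup_iff_dvd hmem hrdet
  simp only [Subgroup.mem_toAddSubgroup', Subgroup.mem_comap, zpowersHom_apply, toAdd_ofAdd] at hs
  have hrange : (Heis.lift u v s h).range = ψ.twistedCommutator := by
    rw [Heis.range_lift]
    refine le_antisymm ?_ (hM.twistedCommutator_le_closure hr fun e => (hs e).1)
    rw [Subgroup.closure_le]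
    rintro _ (rfl | rfl | rfl)
    · exact ψ.apply_mul_inv_mem_twistedCommutator _
    · exact ψ.apply_mul_inv_mem_twistedCommutator _
    · exact (hs s).2 dvd_rfl
  have hinj := Heis.lift_injective h (huv ▸ hdet) (left_ne_zero_of_mul (h ▸ hrdet))
  exact ⟨r', hr', ⟨(MulEquiv.subgroupCongr hrange.symm).trans (MonoidHom.ofInjective hinj).symm⟩⟩

end InducedMatrix

/-- Lemma A.10: let Γ = Γ₀ ⋊ ℤ with Γ₀ = H(r), where the generator of ℤ acts via an
automorphism ψ inducing the matrix M ∈ GL₂(ℤ) on Γ₀/z(Γ₀) ≅ ℤ², and suppose M has no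
eigenvalue equal to 1. Then (i) [Γ,Γ] ⊆ Γ₀ and the image of [Γ,Γ] in Γ₀/z(Γ₀) ≅ ℤ²
equals the image of M − Id and is free abelian of rank 2; (ii) [Γ,Γ] ≅ H(r') for some
positive r' and has finite index in Γ₀; (iii) Γ₀ = rad([Γ,Γ],Γ), the set of g ∈ Γ with
g^k ∈ [Γ,Γ] for some k > 0; in particular Γ₀ is a characteristic subgroup of Γ. -/
theorem stmt_16 (r : ℕ) (hr : 0 < r) (ψ : MulAut (Heis r)) (M : GL (Fin 2) ℤ)
    (hM : InducedMatrix r ψ M)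
    (hEig : ¬ (((M : Matrix (Fin 2) (Fin 2) ℤ).map ((↑) : ℤ → ℂ)).charpoly).IsRoot 1) :
    (commutator (HeisSdp r ψ) ≤
        (SemidirectProduct.inl : Heis r →* HeisSdp r ψ).range ∧
      Subgroup.map (heisProj r)
          (Subgroup.comap (SemidirectProduct.inl : Heis r →* HeisSdp r ψ)
            (commutator (HeisSdp r ψ))) =
        AddSubgroup.toSubgroup
          (LinearMap.range
            (Matrix.mulVecLin ((M : Matrix (Fin 2) (Fin 2) ℤ) - 1))).toAddSubgroup ∧
      Nonempty ((Subgroup.map (heisProj r)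
          (Subgroup.comap (SemidirectProduct.inl : Heis r →* HeisSdp r ψ)
            (commutator (HeisSdp r ψ)))) ≃* Multiplicative (Fin 2 → ℤ))) ∧
    ((∃ r' : ℕ, 0 < r' ∧ Nonempty (commutator (HeisSdp r ψ) ≃* Heis r')) ∧
      (Subgroup.comap (SemidirectProduct.inl : Heis r →* HeisSdp r ψ)
        (commutator (HeisSdp r ψ))).FiniteIndex) ∧
    ((∀ g : HeisSdp r ψ,
        g ∈ (SemidirectProduct.inl : Heis r →* HeisSdp r ψ).range ↔
          ∃ k : ℕ, 0 < k ∧ g ^ k ∈ commutator (HeisSdp r ψ)) ∧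
      Subgroup.Characteristic
        (SemidirectProduct.inl : Heis r →* HeisSdp r ψ).range) := by
  have hdet := Matrix.det_sub_one_ne_zero_of_not_isRoot_charpoly hEig
  have hcomm := ψ.commutator_semidirectProduct
  have hcomap :
      (commutator (HeisSdp r ψ)).comap SemidirectProduct.inl = ψ.twistedCommutator := by
    rw [hcomm]
    exact Subgroup.comap_map_eq_self_of_injective SemidirectProduct.inl_injective _
  have hpow (x : Heis r) : ∃ k : ℕ, 0 < k ∧ x ^ k ∈ ψ.twistedCommutator :=
    Subgroup.exists_pow_mem_of_zpow_mem (mul_ne_zero hdet (by exact_mod_cast hr.ne'))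
      (hM.zpow_mem_twistedCommutator hr x)
  have hrad := ψ.mem_range_inl_iff_exists_pow_mem_commutator hpow
  obtain ⟨r', hr', ⟨e⟩⟩ := hM.exists_mulEquiv_twistedCommutator hr hdet
  rw [hcomap, hM.map_heisProj_twistedCommutator hr]
  refine ⟨⟨hcomm ▸ Subgroup.map_le_range _ _, rfl, Matrix.nonempty_mulEquiv_range_mulVecLin hdet⟩,
    ⟨⟨r', hr', ⟨(MulEquiv.subgroupCongr hcomm).trans
      ((Subgroup.equivMapOfInjective _ _ SemidirectProduct.inl_injective).symm.trans e)⟩⟩,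
      Subgroup.finiteIndex_of_commutator_le_of_exists_pow_mem
        ψ.commutator_le_twistedCommutator hpow⟩,
    hrad, Subgroup.characteristic_of_forall_mem_iff_exists_pow_mem hrad⟩
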